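/- Consider the non-Euclidean composite gradient iteration with β ∈ (0,1), and assume: ρ and f are twice continuously differentiable; μ·D²ρ(x)[u,u] ≤ D²h(x)[u,u] ≤ L·D²ρ(x)[u,u] for all x, u ∈ E; β_ρ(x, y') ≥ (σ/(p+1))·‖y' − x‖^{p+1} for all x, y' ∈ E with σ > 0; ‖D²ρ(x)‖ ≤ L̄ for all x ∈ E; z* is a minimizer of φ over s with β_ρ(z_0, z*) > 0; x* is a minimizer of F = f + ψ over s; and there are ε > 0 and D > 0 such that F(z_i) − F(x*) ≥ ε and ‖z_i − x*‖ ≤ D for all i ≥ 0. Set C = L·σ / ((p+1)·(2L − μ)^{p+1}·L̄^{p+1}). Then every index i ≥ 1 at which the stopping inequality ‖∇h(z_i) + g_i‖ ≤ β·‖∇f(z_i) + g_i‖ fails satisfies i ≤ 1 + (2(p+1)/κ)·log( (D/(β·ε))·(2L·β_ρ(z_0, z*)/C)^{1/(p+1)} ); in particular, the stopping inequality holds for every i exceeding this bound. -/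

import Mathlib

/-!
Put `q = 2L·ρ − h`. The relative bounds place the Bregman distance of `q` between `0` and
`(2L − μ)·L̄/2·‖·‖²`, so by co-coercivity `∇q` is `(2L − μ)L̄`-Lipschitz, and
`∇h(z_i) + g_i = ∇q(z_{i-1}) − ∇q(z_i)`. If the stopping test fails at `z_i`, then together with
`ε ≤ F(z_i) − F(x*) ≤ ‖∇f(z_i) + g_i‖·D` this forces `‖z_i − z_{i-1}‖ ≥ βε/(D(2L − μ)L̄)`, hence
by uniform convexity `L·β_ρ(z_{i-1}, z_i) ≥ C(βε/D)^{p+1}`. On the other hand the three-point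
inequality of the Bregman proximal step gives
`2L·β_ρ(z_{i+1}, z*) + L·β_ρ(z_i, z_{i+1}) ≤ (1 − κ/2)·2L·β_ρ(z_i, z*)`, so
`L·β_ρ(z_{i-1}, z_i) ≤ (1 − κ/2)^i·2L·β_ρ(z_0, z*)`; taking logarithms bounds `i`.
-/

open scoped RealInnerProductSpace
open Set

section FirstOrder

variable {F : Type*} [NormedAddCommGroup F] [NormedSpace ℝ F] {s : Set F} {x w : F}

lemma HasFDerivAt.le_apply_of_forall_le {u : F → ℝ} {u' : F →L[ℝ] ℝ} {v : F} {c : ℝ}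
    (hu : HasFDerivAt u u' x) (h : ∀ t ∈ Icc (0 : ℝ) 1, u x + t * c ≤ u (x + t • v)) :
    c ≤ u' v := by
  have hmin : IsMinOn (fun t : ℝ => u (x + t • v) - t * c) (Icc 0 1) 0 :=
    isMinOn_iff.2 fun t ht => by
      simp only [zero_smul, add_zero, zero_mul, sub_zero]
      linarith [h t ht]
  have hline : HasDerivAt (fun t : ℝ => x + t • v) v 0 := by
    simpa using ((hasDerivAt_id (0 : ℝ)).smul_const v).const_add x
  have hderiv : HasDerivAt (fun t : ℝ => u (x + t • v) - t * c) (u' v - c) 0 :=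
    ((by simpa using hu : HasFDerivAt u u' (x + (0 : ℝ) • v)).comp_hasDerivAt 0 hline).sub
      (by simpa using (hasDerivAt_id (0 : ℝ)).mul_const c)
  have hone : (1 : ℝ) ∈ posTangentConeAt (Icc 0 1) 0 :=
    mem_posTangentConeAt_of_segment_subset (by simp [segment_eq_Icc])
  simpa using hmin.localize.hasFDerivWithinAt_nonneg hderiv.hasDerivWithinAt.hasFDerivWithinAt hone

lemma ConvexOn.add_apply_sub_le {f : F → ℝ} {f' : F →L[ℝ] ℝ} (hf : ConvexOn ℝ s f)
    (hf' : HasFDerivAt f f' x) (hx : x ∈ s) (hw : w ∈ s) : f x + f' (w - x) ≤ f w := by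
  have := hf'.neg.le_apply_of_forall_le (v := w - x) (c := f x - f w) fun t ht => by
    have hseg := hf.2 hx hw (sub_nonneg.2 ht.2) ht.1 (sub_add_cancel 1 t)
    rw [show (1 - t) • x + t • w = x + t • (w - x) by module, smul_eq_mul, smul_eq_mul] at hseg
    simp only [Pi.neg_apply]
    nlinarith
  simp only [neg_apply] at this
  linarith

lemma ConvexOn.sub_apply_sub_le_of_isMinOn_add {ψ k : F → ℝ} {k' : F →L[ℝ] ℝ}
    (hψ : ConvexOn ℝ s ψ) (hk : HasFDerivAt k k' x) (hx : x ∈ s)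
    (hmin : IsMinOn (fun y => k y + ψ y) s x) (hw : w ∈ s) : ψ x - k' (w - x) ≤ ψ w := by
  have := hk.le_apply_of_forall_le (v := w - x) (c := ψ x - ψ w) fun t ht => by
    have hmem := hψ.1 hx hw (sub_nonneg.2 ht.2) ht.1 (sub_add_cancel 1 t)
    have hseg := hψ.2 hx hw (sub_nonneg.2 ht.2) ht.1 (sub_add_cancel 1 t)
    rw [show (1 - t) • x + t • w = x + t • (w - x) by module] at hmem hseg
    rw [smul_eq_mul, smul_eq_mul] at hseg
    have := isMinOn_iff.1 hmin _ hmem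
    nlinarith
  linarith

end FirstOrder

section Real

lemma sub_le_half_of_hasDerivAt_le_mul {φ φ' : ℝ → ℝ} {K : ℝ}
    (hφ : ∀ t, HasDerivAt φ (φ' t) t) (hK : ∀ t ∈ Ioo (0 : ℝ) 1, φ' t ≤ K * t) :
    φ 1 - φ 0 ≤ K / 2 := by
  have hG (t : ℝ) : HasDerivAt (fun t => K / 2 * t ^ 2 - φ t) (K * t - φ' t) t :=
    (((hasDerivAt_pow 2 t).const_mul (K / 2)).sub (hφ t)).congr_deriv (by norm_num; ring)
  have hmono : MonotoneOn (fun t => K / 2 * t ^ 2 - φ t) (Icc 0 1) :=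
    monotoneOn_of_hasDerivWithinAt_nonneg (convex_Icc 0 1)
      (fun t _ => (hG t).continuousAt.continuousWithinAt) (fun t _ => (hG t).hasDerivWithinAt)
      fun t ht => by
        rw [interior_Icc] at ht
        linarith [hK t ht]
  have := hmono (left_mem_Icc.2 zero_le_one) (right_mem_Icc.2 zero_le_one) zero_le_one
  linarith

lemma le_pow_mul_of_add_le_mul {a b : ℕ → ℝ} {r : ℝ} (hr : 0 ≤ r) (ha : ∀ i, 0 ≤ a i)
    (hb : ∀ i, 0 ≤ b i) (h : ∀ i, a (i + 1) + b i ≤ r * a i) (i : ℕ) :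
    b i ≤ r ^ (i + 1) * a 0 := by
  have hgeom (i : ℕ) : a i ≤ r ^ i * a 0 := by
    induction i with
    | zero => simp
    | succ n ih =>
      calc a (n + 1) ≤ r * a n := by linarith [h n, hb n]
        _ ≤ r * (r ^ n * a 0) := mul_le_mul_of_nonneg_left ih hr
        _ = r ^ (n + 1) * a 0 := by ring
  calc b i ≤ r * a i := by linarith [h i, ha (i + 1)]
    _ ≤ r * (r ^ i * a 0) := mul_le_mul_of_nonneg_left (hgeom i) hr
    _ = r ^ (i + 1) * a 0 := by ring

lemma nat_mul_le_log_of_le_one_sub_pow {c X V : ℝ} {n : ℕ} (hc : c ≤ 1) (hX : 0 < X)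
    (h : X ≤ (1 - c) ^ n * V) : n * c ≤ Real.log (V / X) := by
  have hexp : (1 - c) ^ n ≤ Real.exp (-(n * c)) :=
    calc (1 - c) ^ n ≤ Real.exp (-c) ^ n :=
          pow_le_pow_left₀ (sub_nonneg.2 hc) (by linarith [Real.add_one_le_exp (-c)]) n
      _ = Real.exp (-(n * c)) := by rw [← Real.exp_nat_mul]; ring_nf
  have hV : 0 < V := pos_of_mul_pos_right (hX.trans_le h) (by positivity)
  rw [Real.le_log_iff_exp_le (by positivity), le_div_iff₀ hX]
  calc Real.exp (n * c) * X ≤ Real.exp (n * c) * (Real.exp (-(n * c)) * V) := by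
        gcongr; exact h.trans (mul_le_mul_of_nonneg_right hexp hV.le)
    _ = V := by rw [← mul_assoc, ← Real.exp_add, add_neg_cancel, Real.exp_zero, one_mul]

lemma nat_succ_mul_log_mul_rpow {a b : ℝ} (ha : 0 < a) (hb : 0 < b) (n : ℕ) :
    ((n : ℝ) + 1) * Real.log (a * b ^ (1 / ((n : ℝ) + 1))) = Real.log (a ^ (n + 1) * b) := by
  rw [Real.log_mul ha.ne' (Real.rpow_pos_of_pos hb _).ne', Real.log_rpow hb,
    Real.log_mul (by positivity) hb.ne', Real.log_pow]
  push_cast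
  field_simp

lemma nat_le_mul_log_of_le_one_sub_pow {κ C V a : ℝ} {n p : ℕ} (hκ : 0 < κ) (hκ2 : κ ≤ 2)
    (hC : 0 < C) (ha : 0 < a) (h : C * (1 / a) ^ (p + 1) ≤ (1 - κ / 2) ^ n * V) :
    (n : ℝ) ≤ 2 * ((p : ℝ) + 1) / κ * Real.log (a * (V / C) ^ (1 / ((p : ℝ) + 1))) := by
  have hlog := nat_mul_le_log_of_le_one_sub_pow (by linarith) (by positivity) h
  have hV : 0 < V :=
    pos_of_mul_pos_right ((mul_pos hC (by positivity)).trans_le h) (pow_nonneg (by linarith) n)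
  rw [show V / (C * (1 / a) ^ (p + 1)) = a ^ (p + 1) * (V / C) by
      rw [one_div, inv_pow]; field_simp,
    ← nat_succ_mul_log_mul_rpow ha (div_pos hV hC)] at hlog
  rw [div_mul_eq_mul_div, le_div_iff₀ hκ]
  linarith

end Real

section Bregman

variable {E : Type*} [NormedAddCommGroup E] [InnerProductSpace ℝ E]

def bregman (ρ : E → ℝ) (ρ' : E → E) (x w : E) : ℝ := ρ w - ρ x - ⟪ρ' x, w - x⟫

def HasSubgradientWithinAt (ψ : E → ℝ) (g : E) (s : Set E) (x : E) : Prop :=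
  ∀ w ∈ s, ψ x + ⟪g, w - x⟫ ≤ ψ w

lemma bregman_three_point (ρ : E → ℝ) (ρ' : E → E) (x y w : E) :
    bregman ρ ρ' x w = bregman ρ ρ' x y + bregman ρ ρ' y w + ⟪ρ' y - ρ' x, w - y⟫ := by
  simp only [bregman, inner_sub_left, inner_sub_right]
  ring

lemma bregman_add_bregman_swap (ρ : E → ℝ) (ρ' : E → E) (x y : E) :
    bregman ρ ρ' x y + bregman ρ ρ' y x = ⟪ρ' y - ρ' x, y - x⟫ := by
  simp only [bregman, inner_sub_left, inner_sub_right]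
  ring

lemma HasSubgradientWithinAt.sub_le_norm_mul_norm {φ : E → ℝ} {g x w : E} {s : Set E}
    (hφ : HasSubgradientWithinAt φ g s x) (hw : w ∈ s) : φ x - φ w ≤ ‖g‖ * ‖x - w‖ := by
  have := hφ w hw
  have := real_inner_le_norm g (x - w)
  rw [← neg_sub x w, inner_neg_right] at *
  linarith

variable {ρ : E → ℝ} {ρ' : E → E}

/-- Co-coercivity, tested at the point `b - M⁻¹ • (ρ' b - ρ' a)`. -/
lemma sq_norm_sub_le_of_bregman_le {M : ℝ} (hM : 0 < M) (h0 : ∀ x w, 0 ≤ bregman ρ ρ' x w)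
    (hle : ∀ x w, bregman ρ ρ' x w ≤ M / 2 * ‖w - x‖ ^ 2) (a b : E) :
    ‖ρ' b - ρ' a‖ ^ 2 ≤ 2 * M * bregman ρ ρ' a b := by
  set d := ρ' b - ρ' a
  set u := b - M⁻¹ • d
  have hinner : ⟪d, u - b⟫ = -(M⁻¹ * ‖d‖ ^ 2) := by simp [u, inner_smul_right]
  have hu : bregman ρ ρ' b u ≤ M⁻¹ * ‖d‖ ^ 2 / 2 :=
    calc bregman ρ ρ' b u ≤ M / 2 * ‖u - b‖ ^ 2 := hle b u
      _ = M⁻¹ * ‖d‖ ^ 2 / 2 := by simp [u, norm_smul, mul_pow, abs_of_pos hM]; field_simp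
  have hhalf : M⁻¹ * ‖d‖ ^ 2 / 2 ≤ bregman ρ ρ' a b := by
    linarith [bregman_three_point ρ ρ' a b u, h0 a u]
  calc ‖d‖ ^ 2 = 2 * M * (M⁻¹ * ‖d‖ ^ 2 / 2) := by field_simp
    _ ≤ 2 * M * bregman ρ ρ' a b := by gcongr

lemma norm_sub_le_of_bregman_le {M : ℝ} (hM : 0 < M) (h0 : ∀ x w, 0 ≤ bregman ρ ρ' x w)
    (hle : ∀ x w, bregman ρ ρ' x w ≤ M / 2 * ‖w - x‖ ^ 2) (a b : E) :
    ‖ρ' b - ρ' a‖ ≤ M * ‖b - a‖ := by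
  have hab := sq_norm_sub_le_of_bregman_le hM h0 hle a b
  have hba := sq_norm_sub_le_of_bregman_le hM h0 hle b a
  rw [← neg_sub, norm_neg] at hba
  have hsum := bregman_add_bregman_swap ρ ρ' a b
  have hcs := real_inner_le_norm (ρ' b - ρ' a) (b - a)
  have hsq : ‖ρ' b - ρ' a‖ * ‖ρ' b - ρ' a‖ ≤ ‖ρ' b - ρ' a‖ * (M * ‖b - a‖) := by nlinarith
  rcases (norm_nonneg (ρ' b - ρ' a)).eq_or_lt with hzero | hpos
  · rw [← hzero]; positivity
  · exact le_of_mul_le_mul_left hsq hpos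

lemma norm_sub_le_of_relative_bounds {h : E → ℝ} {h' : E → E} {c μ L K : ℝ} (hK : 0 < K)
    (hμc : μ < c) (hLc : L ≤ c) (hρ0 : ∀ x w, 0 ≤ bregman ρ ρ' x w)
    (hρK : ∀ x w, bregman ρ ρ' x w ≤ K / 2 * ‖w - x‖ ^ 2)
    (hrel : ∀ x w, μ * bregman ρ ρ' x w ≤ bregman h h' x w ∧
      bregman h h' x w ≤ L * bregman ρ ρ' x w) (a b : E) :
    ‖(c • ρ' b - h' b) - (c • ρ' a - h' a)‖ ≤ (c - μ) * K * ‖b - a‖ := by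
  have e (x w : E) : bregman (fun x => c * ρ x - h x) (fun x => c • ρ' x - h' x) x w
      = c * bregman ρ ρ' x w - bregman h h' x w := by
    simp only [bregman, inner_sub_left, real_inner_smul_left]
    ring
  refine norm_sub_le_of_bregman_le (ρ := fun x => c * ρ x - h x) (ρ' := fun x => c • ρ' x - h' x)
    (mul_pos (sub_pos.2 hμc) hK) (fun x w => ?_) (fun x w => ?_) a b
  · rw [e]
    nlinarith [hrel x w, hρ0 x w]
  · rw [e]
    have := mul_le_mul_of_nonneg_left (hρK x w) (sub_nonneg.2 hμc.le)
    nlinarith [hrel x w]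

lemma HasSubgradientWithinAt.bregman_prox_descent {ψ h : E → ℝ} {h' : E → E} {s : Set E}
    {c L μ : ℝ} {x y w : E} (hsub : HasSubgradientWithinAt ψ (c • (ρ' x - ρ' y) - h' x) s y)
    (hL : bregman h h' x y ≤ L * bregman ρ ρ' x y)
    (hμ : μ * bregman ρ ρ' x w ≤ bregman h h' x w) (hw : w ∈ s) :
    h y + ψ y + c * bregman ρ ρ' y w + (c - L) * bregman ρ ρ' x y
      ≤ h w + ψ w + (c - μ) * bregman ρ ρ' x w := by
  have hψ := hsub w hw
  simp only [bregman] at hL hμ ⊢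
  simp only [inner_sub_left, inner_sub_right, real_inner_smul_left] at hψ hL hμ ⊢
  linear_combination hψ + hL + hμ

lemma bregman_prox_step_le {ψ h : E → ℝ} {h' : E → E} {s : Set E} {c L μ : ℝ} {z : ℕ → E}
    {zstar : E} (hμ : 0 < μ) (hμL : μ ≤ L) (hLc : L ≤ c) (hρ0 : ∀ x w, 0 ≤ bregman ρ ρ' x w)
    (hrel : ∀ x w, μ * bregman ρ ρ' x w ≤ bregman h h' x w ∧
      bregman h h' x w ≤ L * bregman ρ ρ' x w)
    (hsub : ∀ i,
      HasSubgradientWithinAt ψ (c • (ρ' (z i) - ρ' (z (i + 1))) - h' (z i)) s (z (i + 1)))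
    (hzs : ∀ i, z (i + 1) ∈ s) (hzstar : zstar ∈ s)
    (hmin : ∀ w ∈ s, h zstar + ψ zstar ≤ h w + ψ w) (i : ℕ) :
    (c - L) * bregman ρ ρ' (z i) (z (i + 1))
      ≤ (1 - μ / c) ^ (i + 1) * (c * bregman ρ ρ' (z 0) zstar) := by
  have hc : 0 < c := by linarith
  refine le_pow_mul_of_add_le_mul (a := fun i => c * bregman ρ ρ' (z i) zstar)
    (b := fun i => (c - L) * bregman ρ ρ' (z i) (z (i + 1)))
    (by rw [sub_nonneg, div_le_one hc]; linarith) (fun i => mul_nonneg hc.le (hρ0 _ _))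
    (fun i => mul_nonneg (by linarith) (hρ0 _ _)) (fun i => ?_) i
  have hdesc := (hsub i).bregman_prox_descent (hrel _ _).2 (hrel _ _).1 hzstar
  have hopt := hmin _ (hzs i)
  have : (1 - μ / c) * (c * bregman ρ ρ' (z i) zstar) = (c - μ) * bregman ρ ρ' (z i) zstar := by
    field_simp
  linarith

variable [CompleteSpace E]

lemma hasFDerivAt_bregman (x : E) {w : E} (hρ : HasGradientAt ρ (ρ' w) w) :
    HasFDerivAt (bregman ρ ρ' x) (InnerProductSpace.toDual ℝ E (ρ' w) - innerSL ℝ (ρ' x)) w := by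
  have e : bregman ρ ρ' x = fun y => (ρ y - ρ x) - (innerSL ℝ (ρ' x) y - ⟪ρ' x, x⟫) := by
    ext y; simp [bregman, inner_sub_right]
  rw [e]
  exact (hρ.hasFDerivAt.sub_const (ρ x)).sub ((innerSL ℝ (ρ' x)).hasFDerivAt.sub_const _)

lemma ConvexOn.hasSubgradientWithinAt_of_isMinOn_bregman {ψ : E → ℝ} {s : Set E} {a x y : E}
    {c : ℝ} (hψ : ConvexOn ℝ s ψ) (hρ : HasGradientAt ρ (ρ' y) y) (hy : y ∈ s)
    (hmin : IsMinOn (fun w => ⟪a, w - x⟫ + ψ w + c * bregman ρ ρ' x w) s y) :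
    HasSubgradientWithinAt ψ (c • (ρ' x - ρ' y) - a) s y := by
  intro w hw
  have hk : HasFDerivAt (fun w => ⟪a, w - x⟫ + c * bregman ρ ρ' x w)
      (innerSL ℝ a + c • (InnerProductSpace.toDual ℝ E (ρ' y) - innerSL ℝ (ρ' x))) y :=
    ((innerSL ℝ a).hasFDerivAt.sub_const ⟪a, x⟫).congr_of_eventuallyEq
      (Filter.Eventually.of_forall fun w => by simp [inner_sub_right]) |>.add
      ((hasFDerivAt_bregman x hρ).const_mul c)
  have := hψ.sub_apply_sub_le_of_isMinOn_add hk hy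
    (isMinOn_iff.2 fun w hw => by linarith [isMinOn_iff.1 hmin w hw]) hw
  simp only [add_apply, smul_apply, sub_apply, innerSL_apply_apply,
    InnerProductSpace.toDual_apply_apply, smul_eq_mul] at this
  simp only [inner_sub_left, real_inner_smul_left]
  linarith

lemma bregman_le_of_lipschitz {K : ℝ} (hρ : ∀ x, HasGradientAt ρ (ρ' x) x)
    (hlip : ∀ a b, ‖ρ' a - ρ' b‖ ≤ K * ‖a - b‖) (x w : E) :
    bregman ρ ρ' x w ≤ K / 2 * ‖w - x‖ ^ 2 := by
  set v := w - x
  have hline (t : ℝ) : HasDerivAt (fun t : ℝ => x + t • v) v t := by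
    simpa using ((hasDerivAt_id t).smul_const v).const_add x
  have hφ (t : ℝ) : HasDerivAt (fun t => ρ (x + t • v) - t * ⟪ρ' x, v⟫)
      (⟪ρ' (x + t • v), v⟫ - ⟪ρ' x, v⟫) t :=
    ((hρ _).hasFDerivAt.comp_hasDerivAt t (hline t)).sub
      (by simpa using (hasDerivAt_id t).mul_const ⟪ρ' x, v⟫)
  have := sub_le_half_of_hasDerivAt_le_mul hφ (K := K * ‖v‖ ^ 2) fun t ht => by
    rw [← inner_sub_left]
    calc ⟪ρ' (x + t • v) - ρ' x, v⟫ ≤ ‖ρ' (x + t • v) - ρ' x‖ * ‖v‖ := real_inner_le_norm _ _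
      _ ≤ K * ‖x + t • v - x‖ * ‖v‖ := by gcongr; exact hlip _ _
      _ = K * ‖v‖ ^ 2 * t := by
        rw [add_sub_cancel_left, norm_smul, Real.norm_of_nonneg ht.1.le]; ring
  simp only [one_smul, zero_smul, add_zero, one_mul, zero_mul, sub_zero] at this
  rw [bregman, show x + v = w by simp [v]] at *
  linarith

lemma norm_sub_le_of_norm_iteratedFDeriv_two_le {K : ℝ} (hρ : ∀ x, HasGradientAt ρ (ρ' x) x)
    (hC2 : ContDiff ℝ 2 ρ) (hK : ∀ x, ‖iteratedFDeriv ℝ 2 ρ x‖ ≤ K) (a b : E) :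
    ‖ρ' a - ρ' b‖ ≤ K * ‖a - b‖ := by
  have hgrad : ‖ρ' a - ρ' b‖ = ‖fderiv ℝ ρ a - fderiv ℝ ρ b‖ := by
    rw [(hρ a).hasFDerivAt.fderiv, (hρ b).hasFDerivAt.fderiv, ← map_sub,
      LinearIsometryEquiv.norm_map]
  rw [hgrad]
  refine convex_univ.norm_image_sub_le_of_norm_fderiv_le (𝕜 := ℝ) (fun x _ => ?_) (fun x _ => ?_)
    (mem_univ b) (mem_univ a)
  · exact (hC2.fderiv_right (m := 1) le_rfl).differentiable one_ne_zero x
  · rw [← norm_iteratedFDeriv_one, norm_iteratedFDeriv_fderiv]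
    exact hK x

lemma HasSubgradientWithinAt.add_hasGradientAt {ψ f : E → ℝ} {g f' x : E} {s : Set E}
    (hψ : HasSubgradientWithinAt ψ g s x) (hf : ConvexOn ℝ s f) (hf' : HasGradientAt f f' x)
    (hx : x ∈ s) : HasSubgradientWithinAt (fun y => f y + ψ y) (f' + g) s x := fun w hw => by
  have := hf.add_apply_sub_le hf'.hasFDerivAt hx hw
  rw [InnerProductSpace.toDual_apply_apply] at this
  rw [inner_add_left]
  linarith [hψ w hw]

lemma HasSubgradientWithinAt.div_le_of_not_le {ψ f : E → ℝ} {g gf r x xstar : E} {s : Set E}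
    {ε D M β δ : ℝ} (hψ : HasSubgradientWithinAt ψ g s x) (hf : ConvexOn ℝ s f)
    (hf' : HasGradientAt f gf x) (hx : x ∈ s) (hxstar : xstar ∈ s)
    (hgap : ε ≤ f x + ψ x - (f xstar + ψ xstar)) (hdist : ‖x - xstar‖ ≤ D) (hr : ‖r‖ ≤ M * δ)
    (hfail : ¬ ‖r‖ ≤ β * ‖gf + g‖) (hβ : 0 < β) (hD : 0 < D) (hM : 0 < M) :
    β * ε / D / M ≤ δ := by
  have hsub := (hψ.add_hasGradientAt hf hf' hx).sub_le_norm_mul_norm hxstar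
  have hεD : ε ≤ ‖gf + g‖ * D := by nlinarith [norm_nonneg (gf + g)]
  rw [div_div, div_le_iff₀ (mul_pos hD hM)]
  nlinarith [not_le.1 hfail]

end Bregman

theorem stmt12_general {E : Type*} [NormedAddCommGroup E] [InnerProductSpace ℝ E]
    [FiniteDimensional ℝ E]
    (s : Set E)
    (ψ : E → ℝ) (hψ : ConvexOn ℝ s ψ)
    (f : E → ℝ) (f' : E → E) (hf' : ∀ x, HasGradientAt f (f' x) x)
    (hfconv : ConvexOn ℝ Set.univ f)
    (p : ℕ)
    (h : E → ℝ)
    (h' : E → E)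
    (φ : E → ℝ) (hφ : ∀ z, φ z = h z + ψ z)
    (ρ : E → ℝ) (ρ' : E → E) (hρ' : ∀ x, HasGradientAt ρ (ρ' x) x)
    (Br : E → E → ℝ) (hBr : ∀ x w, Br x w = ρ w - ρ x - ⟪ρ' x, w - x⟫)
    (L μ : ℝ) (hμ : 0 < μ) (hμL : μ ≤ L)
    (hrel : ∀ x w, μ * Br x w ≤ h w - h x - ⟪h' x, w - x⟫ ∧
        h w - h x - ⟪h' x, w - x⟫ ≤ L * Br x w)
    (z : ℕ → E)
    (hzs : ∀ i, z (i + 1) ∈ s)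
    (hzmin : ∀ i : ℕ, ∀ w ∈ s,
        ⟪h' (z i), z (i + 1) - z i⟫ + ψ (z (i + 1)) + 2 * L * Br (z i) (z (i + 1))
          ≤ ⟪h' (z i), w - z i⟫ + ψ w + 2 * L * Br (z i) w)
    (hρC2 : ContDiff ℝ 2 ρ)
    (σ : ℝ) (hσ : 0 < σ)
    (hunif : ∀ x w : E, Br x w ≥ σ / (p + 1) * ‖w - x‖ ^ (p + 1))
    (Lbar : ℝ) (hLbar : ∀ x : E, ‖iteratedFDeriv ℝ 2 ρ x‖ ≤ Lbar)
    (gs : ℕ → E)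
    (hgs : ∀ i : ℕ, gs (i + 1) = (2 * L) • (ρ' (z i) - ρ' (z (i + 1))) - h' (z i))
    (β : ℝ) (hβ : β ∈ Set.Ioo (0 : ℝ) 1)
    (zstar : E) (hzstar : zstar ∈ s) (hzstarmin : ∀ w ∈ s, φ zstar ≤ φ w)
    (hBrpos : 0 < Br (z 0) zstar)
    (xstar : E) (hxstar : xstar ∈ s)
    (ε : ℝ) (hε : 0 < ε) (D : ℝ) (hD : 0 < D)
    (hfar : ∀ i : ℕ, ε ≤ f (z i) + ψ (z i) - (f xstar + ψ xstar))
    (hbound : ∀ i : ℕ, ‖z i - xstar‖ ≤ D)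
    (C : ℝ) (hC : C = L * σ / ((p + 1) * (2 * L - μ) ^ (p + 1) * Lbar ^ (p + 1))) :
    ∀ i : ℕ, 1 ≤ i →
      ¬ (‖h' (z i) + gs i‖ ≤ β * ‖f' (z i) + gs i‖) →
      (i : ℝ) ≤ 1 + 2 * ((p : ℝ) + 1) / (μ / L) *
        Real.log (D / (β * ε) * (2 * L * Br (z 0) zstar / C) ^ (1 / ((p : ℝ) + 1))) := by
  obtain ⟨hβ0, -⟩ := hβ
  obtain rfl : Br = bregman ρ ρ' := funext₂ hBr
  have hL : 0 < L := hμ.trans_le hμL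
  have hρ0 (x w : E) : 0 ≤ bregman ρ ρ' x w := (hunif x w).trans' (by positivity)
  have hρK := bregman_le_of_lipschitz hρ' (norm_sub_le_of_norm_iteratedFDeriv_two_le hρ' hρC2 hLbar)
  have hLbar0 : 0 < Lbar := by
    linarith [pos_of_mul_pos_left (hBrpos.trans_le (hρK (z 0) zstar)) (by positivity)]
  have hM : 0 < (2 * L - μ) * Lbar := mul_pos (by linarith) hLbar0
  have hsub (i : ℕ) : HasSubgradientWithinAt ψ (gs (i + 1)) s (z (i + 1)) :=
    hgs i ▸ hψ.hasSubgradientWithinAt_of_isMinOn_bregman (hρ' _) (hzs i) (isMinOn_iff.2 (hzmin i))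
  intro i hi hfail
  obtain ⟨j, rfl⟩ := Nat.exists_eq_add_of_le' hi
  have hlong : β * ε / D / ((2 * L - μ) * Lbar) ≤ ‖z (j + 1) - z j‖ := by
    refine (hsub j).div_le_of_not_le (hfconv.subset (subset_univ s) hψ.1) (hf' _) (hzs j) hxstar
      (hfar _) (hbound _) ?_ hfail hβ0 hD hM
    rw [hgs, norm_sub_rev (z (j + 1))]
    convert norm_sub_le_of_relative_bounds (c := 2 * L) hLbar0 (by linarith) (by linarith) hρ0 hρK
      hrel (z (j + 1)) (z j) using 2
    module
  have hstep := bregman_prox_step_le hμ hμL (by linarith : L ≤ 2 * L) hρ0 hrel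
    (fun i => hgs i ▸ hsub i) hzs hzstar (fun w hw => by simpa [hφ] using hzstarmin w hw) j
  have hdecay : C * (1 / (D / (β * ε))) ^ (p + 1)
      ≤ (1 - μ / L / 2) ^ (j + 1) * (2 * L * bregman ρ ρ' (z 0) zstar) :=
    calc C * (1 / (D / (β * ε))) ^ (p + 1)
        = L * (σ / (p + 1) * (β * ε / D / ((2 * L - μ) * Lbar)) ^ (p + 1)) := by
          rw [hC, one_div_div, div_pow (β * ε / D), mul_pow]; field_simp
      _ ≤ L * (σ / (p + 1) * ‖z (j + 1) - z j‖ ^ (p + 1)) := by gcongr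
      _ ≤ (2 * L - L) * bregman ρ ρ' (z j) (z (j + 1)) := by
          rw [two_mul, add_sub_cancel_right]; gcongr; exact hunif _ _
      _ ≤ _ := by rw [div_div, mul_comm L 2]; exact hstep
  have hC0 : 0 < C := by
    rw [hC, mul_assoc, ← mul_pow]
    exact div_pos (mul_pos hL hσ) (mul_pos (by positivity) (pow_pos hM _))
  have hcount := nat_le_mul_log_of_le_one_sub_pow (div_pos hμ hL)
    (by rw [div_le_iff₀ hL]; linarith) hC0 (by positivity) hdecay
  push_cast at hcount ⊢
  linarith

theorem stmt12 {E : Type*} [NormedAddCommGroup E] [InnerProductSpace ℝ E]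
    [FiniteDimensional ℝ E]
    (s : Set E) (hs : s.Nonempty) (hsconv : Convex ℝ s)
    (ψ : E → ℝ) (hψ : ConvexOn ℝ s ψ)
    (f : E → ℝ) (f' : E → E) (hf' : ∀ x, HasGradientAt f (f' x) x)
    (hfconv : ConvexOn ℝ Set.univ f)
    (p : ℕ) (hp : 1 ≤ p)
    (y : E) (hy : y ∈ s) (H : ℝ) (hH : 0 < H)
    (h : E → ℝ) (hhdef : ∀ z, h z = f z + H * (‖z - y‖ ^ (p + 1) / (p + 1)))
    (h' : E → E) (hh' : ∀ x, HasGradientAt h (h' x) x)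
    (φ : E → ℝ) (hφ : ∀ z, φ z = h z + ψ z)
    (ρ : E → ℝ) (ρ' : E → E) (hρ' : ∀ x, HasGradientAt ρ (ρ' x) x)
    (hρconv : ConvexOn ℝ Set.univ ρ)
    (Br : E → E → ℝ) (hBr : ∀ x w, Br x w = ρ w - ρ x - ⟪ρ' x, w - x⟫)
    (L μ : ℝ) (hμ : 0 < μ) (hμL : μ ≤ L)
    (hrel : ∀ x w, μ * Br x w ≤ h w - h x - ⟪h' x, w - x⟫ ∧
        h w - h x - ⟪h' x, w - x⟫ ≤ L * Br x w)
    (z : ℕ → E) (hz0 : z 0 = y)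
    (hzs : ∀ i, z (i + 1) ∈ s)
    (hzmin : ∀ i : ℕ, ∀ w ∈ s,
        ⟪h' (z i), z (i + 1) - z i⟫ + ψ (z (i + 1)) + 2 * L * Br (z i) (z (i + 1))
          ≤ ⟪h' (z i), w - z i⟫ + ψ w + 2 * L * Br (z i) w)
    (hρC2 : ContDiff ℝ 2 ρ) (hfC2 : ContDiff ℝ 2 f)
    (hsand : ∀ x u : E,
        μ * iteratedFDeriv ℝ 2 ρ x (fun _ => u) ≤ iteratedFDeriv ℝ 2 h x (fun _ => u) ∧
        iteratedFDeriv ℝ 2 h x (fun _ => u) ≤ L * iteratedFDeriv ℝ 2 ρ x (fun _ => u))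
    (σ : ℝ) (hσ : 0 < σ)
    (hunif : ∀ x w : E, Br x w ≥ σ / (p + 1) * ‖w - x‖ ^ (p + 1))
    (Lbar : ℝ) (hLbar : ∀ x : E, ‖iteratedFDeriv ℝ 2 ρ x‖ ≤ Lbar)
    (gs : ℕ → E)
    (hgs : ∀ i : ℕ, gs (i + 1) = (2 * L) • (ρ' (z i) - ρ' (z (i + 1))) - h' (z i))
    (β : ℝ) (hβ : β ∈ Set.Ioo (0 : ℝ) 1)
    (zstar : E) (hzstar : zstar ∈ s) (hzstarmin : ∀ w ∈ s, φ zstar ≤ φ w)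
    (hBrpos : 0 < Br (z 0) zstar)
    (xstar : E) (hxstar : xstar ∈ s)
    (hxstarmin : ∀ w ∈ s, f xstar + ψ xstar ≤ f w + ψ w)
    (ε : ℝ) (hε : 0 < ε) (D : ℝ) (hD : 0 < D)
    (hfar : ∀ i : ℕ, ε ≤ f (z i) + ψ (z i) - (f xstar + ψ xstar))
    (hbound : ∀ i : ℕ, ‖z i - xstar‖ ≤ D)
    (C : ℝ) (hC : C = L * σ / ((p + 1) * (2 * L - μ) ^ (p + 1) * Lbar ^ (p + 1))) :
    ∀ i : ℕ, 1 ≤ i →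
      ¬ (‖h' (z i) + gs i‖ ≤ β * ‖f' (z i) + gs i‖) →
      (i : ℝ) ≤ 1 + 2 * ((p : ℝ) + 1) / (μ / L) *
        Real.log (D / (β * ε) * (2 * L * Br (z 0) zstar / C) ^ (1 / ((p : ℝ) + 1))) :=
  stmt12_general s ψ hψ f f' hf' hfconv p h h' φ hφ ρ ρ' hρ' Br hBr L μ hμ hμL hrel z hzs hzmin hρC2
    σ hσ hunif Lbar hLbar gs hgs β hβ zstar hzstar hzstarmin hBrpos xstar hxstar ε hε D hD hfar
    hbound C hC
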